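/- arXiv:1506.01958 — 6 statements merged into one kernel-verified Lean document; each statement's English description precedes it below -/
import Mathlib

section
/- Let n ≥ 1 and let a_1, …, a_n be nonzero real numbers. Then for every real number b, the number of sign vectors ε ∈ {−1,1}^n with ∑_{i=1}^n ε_i a_i = b is at most C(n, ⌊n/2⌋); equivalently, ρ_V ≤ C(n, ⌊n/2⌋)/2^n = O(n^{−1/2}). -/
/-!
Record a sign vector `ε` by the set `S` of indices where `ε i • a i = |a i|`; then
`∑ ε i • a i = ∑_{i ∈ S} |a i| - ∑_{i ∉ S} |a i|`. As all `|a i|` are positive, the right-hand side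
strictly increases with `S`, so the sets `S` solving the equation form an antichain of subsets
of `Fin n`, and Sperner's theorem bounds their number by `C(n, ⌊n/2⌋)`.
-/

open Finset

namespace LittlewoodOfford

variable {ι : Type*} [Fintype ι]

noncomputable def agreeSet (a : ι → ℝ) (ε : ι → Bool) : Finset ι := {i | ε i = decide (0 < a i)}

lemma agreeSet_injective (a : ι → ℝ) : Function.Injective (agreeSet a) := by
  intro ε ε' h
  funext i
  have hi := congrArg (i ∈ ·) h
  simp only [agreeSet, mem_filter, mem_univ, true_and, eq_iff_iff] at hi
  revert hi
  cases ε i <;> cases ε' i <;> cases decide (0 < a i) <;> simp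

variable [DecidableEq ι]

def signedSum (w : ι → ℝ) (S : Finset ι) : ℝ := ∑ i ∈ S, w i - ∑ i ∈ Sᶜ, w i

lemma signedSum_eq_sum_ite (w : ι → ℝ) (S : Finset ι) :
    signedSum w S = ∑ i, if i ∈ S then w i else -w i := by
  rw [sum_ite, sum_neg_distrib, filter_mem_eq_inter, univ_inter, ← compl_filter,
    filter_mem_eq_inter, univ_inter, signedSum, sub_eq_add_neg]

lemma signedSum_strictMono {w : ι → ℝ} (hw : ∀ i, 0 < w i) : StrictMono (signedSum w) := by
  intro S T hST
  obtain ⟨i, hiT, hiS⟩ := exists_of_ssubset hST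
  have hS_lt_T : ∑ j ∈ S, w j < ∑ j ∈ T, w j :=
    sum_lt_sum_of_subset hST.subset hiT hiS (hw i) fun j _ _ => (hw j).le
  have hTc_le_Sc : ∑ j ∈ Tᶜ, w j ≤ ∑ j ∈ Sᶜ, w j :=
    sum_le_sum_of_subset_of_nonneg (compl_subset_compl.mpr hST.subset) fun j _ _ => (hw j).le
  unfold signedSum
  linarith

lemma isAntichain_signedSum_eq {w : ι → ℝ} (hw : ∀ i, 0 < w i) (b : ℝ) :
    IsAntichain (· ⊆ ·) {S : Finset ι | signedSum w S = b} :=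
  isAntichain_iff_forall_not_lt.mpr fun _ hS _ hT hST =>
    (signedSum_strictMono hw hST).ne (hS.trans hT.symm)

lemma card_signedSum_eq_le {w : ι → ℝ} (hw : ∀ i, 0 < w i) (b : ℝ) :
    #{S : Finset ι | signedSum w S = b} ≤ (Fintype.card ι).choose (Fintype.card ι / 2) :=
  IsAntichain.sperner <| by simpa using isAntichain_signedSum_eq hw b

lemma sum_ite_eq_signedSum_agreeSet (a : ι → ℝ) (ε : ι → Bool) :
    ∑ i, (if ε i then a i else -a i) = signedSum (fun i => |a i|) (agreeSet a ε) := by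
  rw [signedSum_eq_sum_ite]
  refine sum_congr rfl fun i _ => ?_
  rcases lt_or_ge 0 (a i) with hpos | hnonpos
  · cases h : ε i <;> simp [agreeSet, h, hpos, abs_of_pos hpos]
  · cases h : ε i <;> simp [agreeSet, h, hnonpos.not_gt, abs_of_nonpos hnonpos]

theorem card_sum_ite_eq_le {a : ι → ℝ} (ha : ∀ i, a i ≠ 0) (b : ℝ) :
    #{ε : ι → Bool | ∑ i, (if ε i then a i else -a i) = b} ≤
      (Fintype.card ι).choose (Fintype.card ι / 2) := by
  refine le_trans ?_ (card_signedSum_eq_le (fun i => abs_pos.mpr (ha i)) b)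
  refine card_le_card_of_injOn (agreeSet a) (fun ε hε => ?_) (agreeSet_injective a).injOn
  simpa [← sum_ite_eq_signedSum_agreeSet] using hε

end LittlewoodOfford

theorem littlewood_offord_erdos_general (n : ℕ) (a : Fin n → ℝ) (ha : ∀ i, a i ≠ 0)
    (b : ℝ) :
    Nat.card {ε : Fin n → Bool // (∑ i, if ε i then a i else -a i) = b} ≤
      n.choose (n / 2) := by
  rw [Nat.card_eq_fintype_card, Fintype.card_subtype]
  simpa using LittlewoodOfford.card_sum_ite_eq_le ha b

/-- **Littlewood–Offord–Erdős theorem.** For nonzero reals `a 1, …, a n` and any real `b`,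
the number of sign vectors `ε ∈ {−1,1}^n` with `∑ i, ε i * a i = b` is at most
`C(n, ⌊n/2⌋)`. -/
theorem littlewood_offord_erdos (n : ℕ) (hn : 1 ≤ n) (a : Fin n → ℝ) (ha : ∀ i, a i ≠ 0)
    (b : ℝ) :
    Nat.card {ε : Fin n → Bool // (∑ i, if ε i then a i else -a i) = b} ≤
      n.choose (n / 2) :=
  littlewood_offord_erdos_general n a ha b
end

section
/- For any integers m, n, s ≥ 2 the following holds. Let V = (A_1, …, A_n) be a sequence of elements of GL_m(ℂ), each of order at least s. Then for every B ∈ GL_m(ℂ), the number of sign vectors ε ∈ {−1,1}^n with A_1^{ε_1} A_2^{ε_2} ⋯ A_n^{ε_n} = B is at most 141·max{1/s, 1/√n}·2^n; that is, ρ_V ≤ 141·max{1/s, 1/√n}. -/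
/-!
Kleitman's argument works in any group. Suppose `A i ^ (2 * k) ≠ 1` for `0 < k < t` and let
`N(A, T)` (`signCount`) count the sign vectors whose signed product lies in the finite set `T`.
Fixing the first sign gives
`N(A, T) = N(A', a⁻¹T) + N(A', aT) = N(A', a⁻¹T ∪ aT) + N(A', a⁻¹T ∩ aT)`.
If `a⁻¹T ≠ aT`, the union and the intersection have sizes `ℓ + d` and `ℓ - d` with `d ≥ 1`; as
the sum `S n ℓ` (`centralBinomSum`) of the `ℓ` middle binomial coefficients of order `n` is
concave in `ℓ` and satisfies `S (n+1) (ℓ+1) = S n (ℓ+2) + S n ℓ`, induction on `n` gives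
`t N(A, T) ≤ 2^n |T| + t S n |T|`. If `a⁻¹T = aT`, then `a⁻¹T` is stable under `a²`, whose
orbits have at least `t` points, so `t ≤ |T|` and the trivial bound `2^(n+1)` suffices.
For `T = {B}` and `t = ⌈s/2⌉` this yields `N ≤ 2^(n+1)/s + C(n, ⌊n/2⌋) ≤ (2/s + 1/√n) 2^n`.
-/

open Finset Pointwise

theorem Nat.two_mul_add_one_mul_centralBinom_sq_le (m : ℕ) :
    (2 * m + 1) * m.centralBinom ^ 2 ≤ 16 ^ m := by
  induction m with
  | zero => simp
  | succ m ih =>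
    have key : (m + 1) ^ 2 * ((2 * m + 3) * (m + 1).centralBinom ^ 2)
        ≤ (m + 1) ^ 2 * 16 ^ (m + 1) := by
      calc (m + 1) ^ 2 * ((2 * m + 3) * (m + 1).centralBinom ^ 2)
          = (2 * m + 3) * ((m + 1) * (m + 1).centralBinom) ^ 2 := by ring
        _ = 4 * ((2 * m + 1) * (2 * m + 3)) * ((2 * m + 1) * m.centralBinom ^ 2) := by
            rw [Nat.succ_mul_centralBinom_succ]; ring
        _ ≤ 4 * (2 * m + 2) ^ 2 * 16 ^ m := by gcongr; nlinarith
        _ = (m + 1) ^ 2 * 16 ^ (m + 1) := by ring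
    exact Nat.le_of_mul_le_mul_left key (by positivity)

theorem Nat.mul_choose_half_sq_le (n : ℕ) : n * n.choose (n / 2) ^ 2 ≤ 4 ^ n := by
  obtain ⟨m, rfl | rfl⟩ := Nat.even_or_odd' n
  · have h := Nat.two_mul_add_one_mul_centralBinom_sq_le m
    rw [Nat.mul_div_cancel_left m two_pos, ← Nat.centralBinom_eq_two_mul_choose, pow_mul]
    calc 2 * m * m.centralBinom ^ 2 ≤ (2 * m + 1) * m.centralBinom ^ 2 := by gcongr; omega
      _ ≤ 16 ^ m := h
  · have h := Nat.two_mul_add_one_mul_centralBinom_sq_le (m + 1)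
    have hcb : (m + 1).centralBinom = 2 * (2 * m + 1).choose m := by
      rw [Nat.centralBinom_eq_two_mul_choose, show 2 * (m + 1) = 2 * m + 1 + 1 by ring,
        Nat.choose_succ_succ, Nat.choose_symm_half]
      ring
    rw [show (2 * m + 1) / 2 = m by omega]
    rw [hcb] at h
    have : 4 * ((2 * m + 1) * (2 * m + 1).choose m ^ 2) ≤ 4 * 4 ^ (2 * m + 1) := by
      calc 4 * ((2 * m + 1) * (2 * m + 1).choose m ^ 2)
          ≤ (2 * (m + 1) + 1) * (2 * (2 * m + 1).choose m) ^ 2 := by ring_nf; omega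
        _ ≤ 16 ^ (m + 1) := h
        _ = 4 * 4 ^ (2 * m + 1) := by rw [show (16 : ℕ) = 4 ^ 2 by norm_num, ← pow_mul]; ring
    omega

theorem Nat.choose_half_le_two_pow_div_sqrt {n : ℕ} (hn : 0 < n) :
    (n.choose (n / 2) : ℝ) ≤ 2 ^ n / Real.sqrt n := by
  have hsqrt : 0 < Real.sqrt n := Real.sqrt_pos.mpr (by exact_mod_cast hn)
  rw [le_div_iff₀ hsqrt, ← pow_le_pow_iff_left₀ (by positivity) (by positivity) two_ne_zero,
    mul_pow, Real.sq_sqrt n.cast_nonneg, ← pow_mul, mul_comm n, pow_mul]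
  exact_mod_cast (mul_comm _ _).trans_le (Nat.mul_choose_half_sq_le n) |>.trans_eq (by norm_num)

section ConcaveSequence

variable {f : ℕ → ℕ}

theorem concave_succ_add_le (hf : ∀ a, f (a + 2) + f a ≤ 2 * f (a + 1)) {x y : ℕ}
    (hxy : x ≤ y) : f (y + 1) + f x ≤ f y + f (x + 1) := by
  induction y, hxy using Nat.le_induction with
  | base => exact (add_comm _ _).le
  | succ y _ ih =>
    have h : f (y + 1 + 1) + f y ≤ 2 * f (y + 1) := hf y
    omega

theorem concave_add_add_le (hf : ∀ a, f (a + 2) + f a ≤ 2 * f (a + 1)) {a b : ℕ}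
    (hab : a ≤ b) (k : ℕ) : f (b + k) + f a ≤ f b + f (a + k) := by
  induction k with
  | zero => rfl
  | succ k ih =>
    have := concave_succ_add_le hf (Nat.add_le_add_right hab k)
    rw [← add_assoc, ← add_assoc]
    omega

end ConcaveSequence

def centralBinomSum (n l : ℕ) : ℕ :=
  ∑ i ∈ range (n + 1) with n < 2 * i + l ∧ 2 * i ≤ n + l, n.choose i

theorem centralBinomSum_zero_right (n : ℕ) : centralBinomSum n 0 = 0 :=
  sum_eq_zero fun i hi => by simp only [mem_filter] at hi; omega

theorem centralBinomSum_zero_left {l : ℕ} (hl : 0 < l) : centralBinomSum 0 l = 1 := by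
  simp [centralBinomSum, sum_filter, hl]

theorem centralBinomSum_one (n : ℕ) : centralBinomSum n 1 = n.choose (n / 2) := by
  have hwindow : {i ∈ range (n + 1) | n < 2 * i + 1 ∧ 2 * i ≤ n + 1} = {(n + 1) / 2} := by
    ext i
    simp only [mem_filter, mem_range, mem_singleton]
    omega
  rw [centralBinomSum, hwindow, sum_singleton]
  exact Nat.choose_symm_of_eq_add (by omega)

theorem centralBinomSum_succ_succ (n l : ℕ) :
    centralBinomSum (n + 1) (l + 1) = centralBinomSum n (l + 2) + centralBinomSum n l := by
  let g : ℕ → ℕ → ℕ := fun i j => if j < i + l + 1 ∧ i ≤ j + l + 1 then 1 else 0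
  calc centralBinomSum (n + 1) (l + 1)
      = ∑ i ∈ range (n + 2), (n + 1).choose i * g i (n + 1 - i) := by
        rw [centralBinomSum, sum_filter]
        refine sum_congr rfl fun i hi => ?_
        simp only [mem_range] at hi
        simp only [g, mul_ite, mul_one, mul_zero]
        congr 1
        apply propext
        omega
    _ = ∑ i ∈ range (n + 1), (n.choose i * g i (n + 1 - i) + n.choose i * g (i + 1) (n - i)) := by
        simpa [sum_add_distrib] using sum_choose_succ_mul g n
    _ = centralBinomSum n (l + 2) + centralBinomSum n l := by
        rw [centralBinomSum, centralBinomSum, sum_filter, sum_filter, ← sum_add_distrib]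
        refine sum_congr rfl fun i hi => ?_
        simp only [mem_range] at hi
        simp only [g]
        split_ifs <;> omega

theorem centralBinomSum_concave (n l : ℕ) :
    centralBinomSum n (l + 2) + centralBinomSum n l ≤ 2 * centralBinomSum n (l + 1) := by
  induction n generalizing l with
  | zero =>
    rcases l with _ | l <;>
      simp only [centralBinomSum_zero_left, centralBinomSum_zero_right, Nat.succ_pos] <;> omega
  | succ n ih =>
    rcases l with _ | l
    · simp only [centralBinomSum_succ_succ, centralBinomSum_zero_right]
      have := ih 1
      omega
    · show centralBinomSum (n + 1) (l + 3) + centralBinomSum (n + 1) (l + 1)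
        ≤ 2 * centralBinomSum (n + 1) (l + 2)
      have e₁ : centralBinomSum (n + 1) (l + 3)
          = centralBinomSum n (l + 4) + centralBinomSum n (l + 2) := centralBinomSum_succ_succ n _
      have e₂ : centralBinomSum (n + 1) (l + 2)
          = centralBinomSum n (l + 3) + centralBinomSum n (l + 1) := centralBinomSum_succ_succ n _
      have h₁ := ih l
      have h₂ : centralBinomSum n (l + 4) + centralBinomSum n (l + 2)
          ≤ 2 * centralBinomSum n (l + 3) := ih (l + 2)
      rw [e₁, e₂, centralBinomSum_succ_succ]
      omega

theorem Fin.card_filter_cons {α : Type*} [Fintype α] {n : ℕ} (p : (Fin (n + 1) → α) → Prop)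
    [DecidablePred p] : #{ε | p ε} = ∑ a, #{ε | p (Fin.cons a ε)} := by
  simp only [card_filter]
  rw [← (Fin.consEquiv fun _ => α).sum_comp, Fintype.sum_prod_type]
  rfl

section SignedProducts

variable {G : Type*} [Group G] {n : ℕ}

def signedProd (A : Fin n → G) (ε : Fin n → Bool) : G :=
  (List.ofFn fun i => if ε i then A i else (A i)⁻¹).prod

theorem signedProd_cons (A : Fin (n + 1) → G) (b : Bool) (ε : Fin n → Bool) :
    signedProd A (Fin.cons b ε) = (if b then A 0 else (A 0)⁻¹) * signedProd (Fin.tail A) ε := by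
  simp [signedProd, List.ofFn_succ, Fin.tail]

variable [DecidableEq G]

def signCount (A : Fin n → G) (T : Finset G) : ℕ := #{ε | signedProd A ε ∈ T}

theorem signCount_le (A : Fin n → G) (T : Finset G) : signCount A T ≤ 2 ^ n :=
  (card_filter_le _ _).trans_eq (by simp)

@[simp] theorem signCount_empty (A : Fin n → G) : signCount A ∅ = 0 := by
  simp [signCount]

theorem signCount_succ (A : Fin (n + 1) → G) (T : Finset G) :
    signCount A T = signCount (Fin.tail A) ((A 0)⁻¹ • T) + signCount (Fin.tail A) (A 0 • T) := by
  simp only [signCount, Fin.card_filter_cons, Fintype.sum_bool, signedProd_cons, if_true,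
    Bool.false_eq_true, if_false, ← inv_smul_mem_iff, inv_inv, smul_eq_mul]

theorem signCount_union_add_inter (A : Fin n → G) (T₁ T₂ : Finset G) :
    signCount A (T₁ ∪ T₂) + signCount A (T₁ ∩ T₂) = signCount A T₁ + signCount A T₂ := by
  simp only [signCount, mem_union, mem_inter, filter_or, filter_and, card_union_add_card_inter]

theorem le_card_of_smul_finset_eq {t : ℕ} {w : G} {T : Finset G} (hT : T.Nonempty)
    (hwT : w • T = T) (hw : ∀ k, 0 < k → k < t → w ^ k ≠ 1) : t ≤ #T := by
  obtain ⟨x, hx⟩ := hT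
  have hmem (k : ℕ) : w ^ k * x ∈ T := by
    induction k with
    | zero => simpa
    | succ k ih => rw [pow_succ', mul_assoc, ← smul_eq_mul, ← hwT]; exact smul_mem_smul_finset ih
  have hinj : Set.InjOn (fun k => w ^ k * x) (range t) := by
    intro i hi j hj hij
    have hpow : w ^ i = w ^ j := mul_right_cancel hij
    simp only [coe_range, Set.mem_Iio] at hi hj
    clear hij
    by_contra hne
    wlog hlt : i < j generalizing i j
    · exact this hpow.symm hj hi (Ne.symm hne) (by omega)
    exact hw (j - i) (by omega) (by omega)
      (mul_eq_left.mp (by rw [pow_mul_pow_sub w hlt.le, hpow]))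
  simpa using card_le_card_of_injOn _ (fun k _ => hmem k) hinj

theorem mul_signCount_le {t : ℕ} {A : Fin n → G}
    (hA : ∀ i k, 0 < k → k < t → A i ^ (2 * k) ≠ 1) (T : Finset G) :
    t * signCount A T ≤ 2 ^ n * #T + t * centralBinomSum n #T := by
  induction n generalizing T with
  | zero =>
    rcases T.eq_empty_or_nonempty with rfl | hT
    · simp
    · have hcount : signCount A T ≤ 1 := signCount_le A T
      rw [centralBinomSum_zero_left hT.card_pos, mul_one]
      exact le_add_left (mul_le_of_le_one_right' hcount)
  | succ n ih =>
    rcases T.eq_empty_or_nonempty with rfl | hT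
    · simp
    rw [signCount_succ, ← signCount_union_add_inter]
    set a := A 0
    have hcard₁ : #(a⁻¹ • T) = #T := card_smul_finset _ _
    have hcard₂ : #(a • T) = #T := card_smul_finset _ _
    by_cases hsame : a⁻¹ • T = a • T
    · have hinv : (a ^ 2) • (a⁻¹ • T) = a⁻¹ • T := by
        rw [smul_smul, hsame, sq, mul_inv_cancel_right]
      have htT : t ≤ #T := hcard₁ ▸ le_card_of_smul_finset_eq hT.smul_finset hinv
        fun k hk hkt => by rw [← pow_mul]; exact hA 0 k hk hkt
      calc t * (signCount (Fin.tail A) (a⁻¹ • T ∪ a • T)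
            + signCount (Fin.tail A) (a⁻¹ • T ∩ a • T))
          ≤ #T * (2 ^ n + 2 ^ n) :=
            Nat.mul_le_mul htT (add_le_add (signCount_le _ _) (signCount_le _ _))
        _ = 2 ^ (n + 1) * #T := by ring
        _ ≤ 2 ^ (n + 1) * #T + t * centralBinomSum (n + 1) #T := le_add_right le_rfl
    · set U := a⁻¹ • T ∪ a • T
      set I := a⁻¹ • T ∩ a • T
      have hsum : #U + #I = 2 * #T := by rw [card_union_add_card_inter]; omega
      have hI : #I < #T := by
        refine hcard₁ ▸ card_lt_card (ssubset_of_subset_of_ne inter_subset_left fun h => hsame ?_)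
        exact eq_of_subset_of_card_le (inter_eq_left.mp h) (by omega)
      obtain ⟨p, hp⟩ : ∃ p, #T = p + 1 := ⟨#T - 1, by omega⟩
      have hconcave : centralBinomSum n #U + centralBinomSum n #I
          ≤ centralBinomSum n (p + 2) + centralBinomSum n p := by
        have h := concave_add_add_le (centralBinomSum_concave n) (show #I ≤ p by omega) (p + 2 - #I)
        rwa [show p + (p + 2 - #I) = #U by omega, show #I + (p + 2 - #I) = p + 2 by omega,
          add_comm (centralBinomSum n p)] at h
      have ih' := ih (A := Fin.tail A) (fun i => hA i.succ)
      calc t * (signCount (Fin.tail A) U + signCount (Fin.tail A) I)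
          ≤ (2 ^ n * #U + t * centralBinomSum n #U) + (2 ^ n * #I + t * centralBinomSum n #I) := by
            rw [mul_add]; exact add_le_add (ih' U) (ih' I)
        _ = 2 ^ n * (#U + #I) + t * (centralBinomSum n #U + centralBinomSum n #I) := by ring
        _ ≤ 2 ^ n * (2 * #T) + t * (centralBinomSum n (p + 2) + centralBinomSum n p) := by
            rw [hsum]; gcongr
        _ = 2 ^ (n + 1) * #T + t * centralBinomSum (n + 1) #T := by
            rw [hp, centralBinomSum_succ_succ]; ring

theorem signCount_singleton_le {s : ℕ} (hs : 0 < s) (hn : 0 < n) {A : Fin n → G}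
    (hA : ∀ i, orderOf (A i) = 0 ∨ s ≤ orderOf (A i)) (B : G) :
    (signCount A {B} : ℝ) ≤ (2 / s + 1 / Real.sqrt n) * 2 ^ n := by
  set t := (s + 1) / 2
  have ht : 0 < t := by omega
  have hA' (i : Fin n) (k : ℕ) (hk : 0 < k) (hkt : k < t) : A i ^ (2 * k) ≠ 1 := by
    rcases hA i with h | h
    · exact orderOf_eq_zero_iff'.mp h _ (by omega)
    · exact pow_ne_one_of_lt_orderOf (by omega) (by omega)
  have hmain := mul_signCount_le hA' {B}
  rw [card_singleton, centralBinomSum_one, mul_one] at hmain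
  have hcount : (signCount A {B} : ℝ) ≤ 2 ^ n / t + n.choose (n / 2) := by
    have hmain' : (t : ℝ) * signCount A {B} ≤ 2 ^ n + t * n.choose (n / 2) := by
      exact_mod_cast hmain
    rw [div_add' _ _ _ (by positivity), le_div_iff₀ (by positivity)]
    linarith
  have hts : (2 : ℝ) ^ n / t ≤ 2 / s * 2 ^ n := by
    rw [div_mul_eq_mul_div, div_le_div_iff₀ (by positivity) (by positivity)]
    have hst : (s : ℝ) ≤ 2 * t := by norm_cast; omega
    nlinarith [mul_le_mul_of_nonneg_left hst (by positivity : (0 : ℝ) ≤ 2 ^ n)]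
  have hchoose := Nat.choose_half_le_two_pow_div_sqrt hn
  rw [add_mul, one_div_mul_eq_div]
  linarith

theorem nonabelian_littlewood_offord_GL_C_general (m n s : ℕ) (hn : 2 ≤ n) (hs : 2 ≤ s)
    (A : Fin n → GL (Fin m) ℂ)
    (hA : ∀ i, orderOf (A i) = 0 ∨ s ≤ orderOf (A i))
    (B : GL (Fin m) ℂ) :
    (Nat.card {ε : Fin n → Bool //
        (List.ofFn fun i => if ε i then A i else (A i)⁻¹).prod = B} : ℝ) ≤
      141 * max (1 / (s : ℝ)) (1 / Real.sqrt n) * 2 ^ n := by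
  classical
  have hcard : Nat.card {ε : Fin n → Bool //
      (List.ofFn fun i => if ε i then A i else (A i)⁻¹).prod = B} = signCount A {B} := by
    rw [Nat.card_eq_fintype_card, Fintype.card_subtype]
    simp [signCount, signedProd]
  have hbound := signCount_singleton_le (by omega) (by omega) hA B
  have hs' : 2 / (s : ℝ) ≤ 2 * max (1 / (s : ℝ)) (1 / Real.sqrt n) := by
    rw [div_eq_mul_one_div]; gcongr; exact le_max_left _ _
  have hn' : 1 / Real.sqrt n ≤ max (1 / (s : ℝ)) (1 / Real.sqrt n) := le_max_right _ _
  rw [hcard]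
  refine hbound.trans (mul_le_mul_of_nonneg_right ?_ (by positivity))
  have : 0 ≤ max (1 / (s : ℝ)) (1 / Real.sqrt n) := hn'.trans' (by positivity)
  linarith

/-- **Non-abelian Littlewood–Offord inequality** (Theorem 1.3). For `m, n, s ≥ 2` and a
sequence `A 1, …, A n` of elements of `GL_m(ℂ)`, each of order at least `s` (i.e. of
infinite order, `orderOf (A i) = 0`, or of finite order `≥ s`), and any `B ∈ GL_m(ℂ)`,
the number of sign vectors `ε ∈ {−1,1}^n` with `A 1 ^ ε 1 ⋯ A n ^ ε n = B` is at most
`141 · max {1/s, 1/√n} · 2^n`. -/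
theorem nonabelian_littlewood_offord_GL_C (m n s : ℕ) (hm : 2 ≤ m) (hn : 2 ≤ n) (hs : 2 ≤ s)
    (A : Fin n → GL (Fin m) ℂ)
    (hA : ∀ i, orderOf (A i) = 0 ∨ s ≤ orderOf (A i))
    (B : GL (Fin m) ℂ) :
    (Nat.card {ε : Fin n → Bool //
        (List.ofFn fun i => if ε i then A i else (A i)⁻¹).prod = B} : ℝ) ≤
      141 * max (1 / (s : ℝ)) (1 / Real.sqrt n) * 2 ^ n :=
  nonabelian_littlewood_offord_GL_C_general m n s hn hs A hA B
end SignedProducts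
end

section
/- There exists an integer p_0 > 1 such that the following holds whenever p ≥ p_0. Let m ≥ 43 be an integer, p ≥ m a prime number, and n, s ≥ 2 integers. Let V = (A_1, …, A_n) be a sequence of elements of S = PSL_m(𝔽_p), each of order at least s. Then for every B ∈ S, the number of sign vectors ε ∈ {−1,1}^n with A_1^{ε_1} ⋯ A_n^{ε_n} = B is at most (2/p + 120/s + 19/√n)·2^n; that is, ρ_V ≤ 2/p + 120/s + 19/√n. -/
open Matrix

/-- `PSL_m(𝔽_p)`: the quotient of `SL_m(𝔽_p)` by its center. -/
def PSL (m p : ℕ) : Type :=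
  Matrix.SpecialLinearGroup (Fin m) (ZMod p) ⧸
    Subgroup.center (Matrix.SpecialLinearGroup (Fin m) (ZMod p))

instance (m p : ℕ) : Group (PSL m p) :=
  inferInstanceAs (Group (_ ⧸ Subgroup.center (Matrix.SpecialLinearGroup (Fin m) (ZMod p))))

/-!
In any finite group, `ρ_V ≤ √(24 / (24 + ⌊n/2⌋)) + 8 / s ≤ 120 / s + 19 / √n`. Let `μ` be the
distribution of a random signed product. Prepending a factor `a^{±1}` averages `μ` over left
translation by `a` and `a⁻¹`, which lowers the collision probability `q = ∑ μ²` by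
`¼ ∑ (μ x - μ (a² x))²`. If `μ` takes a value `M > 8 / s`, then, the orbit of `a²` having length
`≥ s / 2`, this loss is at least `M³ / 48 ≥ q³ / 48`, and the recursion `q ↦ q - q³ / 48` forces
`q_k ≤ √(24 / (24 + k))`. Finally `μ_n` is the convolution of the walks along the two halves of
the sequence, so by Cauchy–Schwarz its values are at most the geometric mean of their collision
probabilities.
-/

open Finset

theorem sum_sq_le_mul_sum {ι : Type*} [Fintype ι] {f : ι → ℝ} {M : ℝ} (hf0 : ∀ x, 0 ≤ f x)
    (hf : ∀ x, f x ≤ M) : ∑ x, f x ^ 2 ≤ M * ∑ x, f x := by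
  rw [mul_sum]
  exact sum_le_sum fun x _ => by rw [sq]; exact mul_le_mul_of_nonneg_right (hf x) (hf0 x)

theorem sub_cube_div_le_sqrt {q : ℝ} {k : ℕ} (hq0 : 0 ≤ q) (hq : q ≤ √(24 / (24 + k))) :
    q - q ^ 3 / 48 ≤ √(24 / (24 + (k + 1 : ℕ))) := by
  apply Real.le_sqrt_of_sq_le
  have hqk : q ^ 2 * (24 + k) ≤ 24 :=
    (le_div_iff₀ (by positivity)).1 ((Real.le_sqrt hq0 (by positivity)).1 hq)
  have hq1 : q ^ 2 ≤ 1 := by nlinarith [k.cast_nonneg (α := ℝ)]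
  rw [le_div_iff₀ (by positivity), Nat.cast_succ]
  calc (q - q ^ 3 / 48) ^ 2 * (24 + (k + 1))
      = q ^ 2 * (24 + k) * (1 - q ^ 2 / 48) ^ 2 + q ^ 2 * (1 - q ^ 2 / 48) ^ 2 := by ring
    _ ≤ 24 * (1 - q ^ 2 / 48) ^ 2 + q ^ 2 * (1 - q ^ 2 / 48) ^ 2 := by gcongr
    _ = 24 - (q ^ 2) ^ 2 / 32 + (q ^ 2) ^ 3 / 2304 := by ring
    _ ≤ 24 := by nlinarith [sq_nonneg q, pow_le_one₀ (sq_nonneg q) hq1 (n := 2)]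

theorem sqrt_div_le_nineteen_div_sqrt {n : ℕ} (hn : 1 ≤ n) :
    √(24 / (24 + (n / 2 : ℕ))) ≤ 19 / √n := by
  have hn' : (0 : ℝ) < n := by exact_mod_cast hn
  rw [le_div_iff₀ (Real.sqrt_pos.2 hn'), ← Real.sqrt_mul (by positivity),
    Real.sqrt_le_left (by norm_num), div_mul_eq_mul_div, div_le_iff₀ (by positivity)]
  exact_mod_cast (by omega : 24 * n ≤ 19 ^ 2 * (24 + n / 2))

namespace SignWalk

variable {G : Type*} [Group G]

noncomputable def signAvg (a : G) (f : G → ℝ) (x : G) : ℝ := (f (a⁻¹ * x) + f (a * x)) / 2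

theorem signAvg_le {f : G → ℝ} {M : ℝ} (hf : ∀ x, f x ≤ M) (a x : G) : signAvg a f x ≤ M := by
  unfold signAvg; linarith [hf (a⁻¹ * x), hf (a * x)]

theorem signAvg_nonneg {f : G → ℝ} (hf : ∀ x, 0 ≤ f x) (a x : G) : 0 ≤ signAvg a f x := by
  unfold signAvg; linarith [hf (a⁻¹ * x), hf (a * x)]

theorem orderOf_le_two_mul_orderOf_sq [Finite G] (a : G) : orderOf a ≤ 2 * orderOf (a ^ 2) :=
  Nat.le_of_dvd (by positivity [orderOf_pos (a ^ 2)])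
    (orderOf_dvd_of_pow_eq_one (by rw [pow_mul, pow_orderOf_eq_one]))

section Fintype

variable [Fintype G]

theorem sum_comp_mul_left {M : Type*} [AddCommMonoid M] (b : G) (h : G → M) :
    ∑ x, h (b * x) = ∑ x, h x :=
  Equiv.sum_comp (Equiv.mulLeft b) h

theorem sum_signAvg (a : G) (f : G → ℝ) : ∑ x, signAvg a f x = ∑ x, f x := by
  simp only [signAvg, ← sum_div, sum_add_distrib, sum_comp_mul_left _ f]
  ring

theorem sum_sq_signAvg (a : G) (f : G → ℝ) :
    ∑ x, signAvg a f x ^ 2 = ∑ x, f x ^ 2 - (∑ x, (f x - f (a ^ 2 * x)) ^ 2) / 4 := by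
  have hcross : ∑ x, f (a⁻¹ * x) * f (a * x) = ∑ x, f x * f (a ^ 2 * x) := by
    rw [← sum_comp_mul_left a]
    simp [← mul_assoc, sq]
  have hexp (x : G) : signAvg a f x ^ 2
      = (f (a⁻¹ * x) ^ 2 + f (a * x) ^ 2 + 2 * (f (a⁻¹ * x) * f (a * x))) / 4 := by
    unfold signAvg; ring
  simp only [hexp, sub_sq, ← sum_div, sum_add_distrib, sum_sub_distrib, ← mul_sum, hcross,
    sum_comp_mul_left _ (f · ^ 2)]
  simp only [mul_assoc, ← mul_sum]
  ring

theorem sum_range_pow_mul_le {h : G → ℝ} (hh : ∀ y, 0 ≤ h y) (g x : G) {j : ℕ}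
    (hj : j ≤ orderOf g) : ∑ i ∈ range j, h (g ^ i * x) ≤ ∑ y, h y := by
  classical
  have hinj : Set.InjOn (g ^ · * x) (range j) := fun i hi i' hi' hii' =>
    pow_injOn_Iio_orderOf (lt_of_lt_of_le (mem_range.1 hi) hj)
      (lt_of_lt_of_le (mem_range.1 hi') hj) (mul_right_cancel hii')
  rw [← sum_image hinj]
  exact sum_le_univ_sum_of_nonneg hh

theorem sq_sub_le_mul_sum_sq_sub (f : G → ℝ) (g x : G) {j : ℕ} (hj : j ≤ orderOf g) :
    (f x - f (g ^ j * x)) ^ 2 ≤ j * ∑ y, (f y - f (g * y)) ^ 2 := by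
  have htel : ∑ i ∈ range j, (f (g ^ i * x) - f (g * (g ^ i * x))) = f x - f (g ^ j * x) := by
    simpa [pow_succ', mul_assoc] using sum_range_sub' (fun i => f (g ^ i * x)) j
  calc (f x - f (g ^ j * x)) ^ 2
      ≤ j * ∑ i ∈ range j, (f (g ^ i * x) - f (g * (g ^ i * x))) ^ 2 := by
        simpa [htel] using sq_sum_le_card_mul_sum_sq (s := range j)
          (f := fun i => f (g ^ i * x) - f (g * (g ^ i * x)))
    _ ≤ j * ∑ y, (f y - f (g * y)) ^ 2 := by
        gcongr
        exact sum_range_pow_mul_le (fun y => sq_nonneg (f y - f (g * y))) g x hj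

theorem exists_pow_mul_le {f : G → ℝ} (hf0 : ∀ x, 0 ≤ f x) (hf1 : ∑ x, f x = 1)
    (g x : G) {r : ℕ} (hr : r < orderOf g) : ∃ j ≤ r, f (g ^ j * x) ≤ 1 / (r + 1) := by
  have hmass : ∑ i ∈ range (r + 1), f (g ^ i * x) ≤ ∑ _i ∈ range (r + 1), (1 / (r + 1) : ℝ) := by
    rw [sum_const, card_range, nsmul_eq_mul, Nat.cast_succ, mul_one_div_cancel (by positivity),
      ← hf1]
    exact sum_range_pow_mul_le hf0 g x hr
  obtain ⟨j, hj, hle⟩ := exists_le_of_sum_le nonempty_range_add_one hmass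
  exact ⟨j, Nat.lt_succ_iff.1 (mem_range.1 hj), hle⟩

/-- The value `M = f x₀` falls below `M / 2` within `r = ⌈2 / M⌉ < orderOf g` steps along the
orbit of `g`, since the orbit carries mass at most `1`; Cauchy–Schwarz along those steps then
gives `(M / 2)² ≤ r ∑ y, (f y - f (g * y)) ^ 2`. -/
theorem cube_le_mul_sum_sq_sub {f : G → ℝ} (hf0 : ∀ x, 0 ≤ f x) (hf1 : ∑ x, f x = 1)
    {g x₀ : G} (hord : 4 ≤ f x₀ * orderOf g) :
    f x₀ ^ 3 ≤ 12 * ∑ y, (f y - f (g * y)) ^ 2 := by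
  set M := f x₀
  set D := ∑ y, (f y - f (g * y)) ^ 2
  have hM1 : M ≤ 1 := hf1 ▸ single_le_sum (fun x _ => hf0 x) (mem_univ x₀)
  have hM0 : 0 < M := by nlinarith [(orderOf g).cast_nonneg (α := ℝ)]
  set r := ⌈2 / M⌉₊
  have hr_ge : 2 ≤ r * M := (div_le_iff₀ hM0).1 (Nat.le_ceil _)
  have hr_lt : (r : ℝ) < 2 / M + 1 := Nat.ceil_lt_add_one (by positivity)
  have hrM : r * M < 2 + M := by
    calc r * M < (2 / M + 1) * M := by gcongr
      _ = 2 + M := by field_simp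
  have hr : r < orderOf g := by
    have : 2 / M ≤ orderOf g / 2 := by rw [div_le_div_iff₀ hM0 two_pos]; linarith
    have : (r : ℝ) < orderOf g := by nlinarith
    exact_mod_cast this
  obtain ⟨j, hjr, hj⟩ := exists_pow_mul_le hf0 hf1 g x₀ hr
  have hdrop : M / 2 ≤ M - f (g ^ j * x₀) := by
    have : 1 / ((r : ℝ) + 1) ≤ M / 2 := by
      rw [div_le_div_iff₀ (by positivity) two_pos]; nlinarith
    linarith
  have hD := sq_sub_le_mul_sum_sq_sub f g x₀ (hjr.trans hr.le)
  have hjD : (j : ℝ) * D ≤ r * D := by gcongr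
  calc M ^ 3 = 4 * M * (M / 2) ^ 2 := by ring
    _ ≤ 4 * M * (r * D) := by gcongr; nlinarith
    _ = 4 * (r * M) * D := by ring
    _ ≤ 12 * D := by nlinarith [sum_nonneg fun y (_ : y ∈ univ) => sq_nonneg (f y - f (g * y))]

end Fintype

variable [DecidableEq G]

/-- `signWalk l x` is the probability that the product `l₀ ^ (±1) * l₁ ^ (±1) * ⋯` of the entries
of `l`, with independent uniform signs, equals `x`. -/
noncomputable def signWalk : List G → G → ℝ
  | [] => Pi.single 1 1
  | a :: l => signAvg a (signWalk l)

theorem signWalk_nonneg (l : List G) (x : G) : 0 ≤ signWalk l x := by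
  induction l generalizing x with
  | nil => simp only [signWalk, Pi.single_apply]; positivity
  | cons a l ih => exact signAvg_nonneg ih a x

theorem card_signProducts_eq {n : ℕ} (A : Fin n → G) (x : G) :
    (Nat.card {ε : Fin n → Bool // (List.ofFn fun i => if ε i then A i else (A i)⁻¹).prod = x}
      : ℝ) = 2 ^ n * signWalk (List.ofFn A) x := by
  rw [Nat.card_eq_fintype_card, Fintype.card_subtype, natCast_card_filter]
  induction n generalizing x with
  | zero => simp [signWalk, Pi.single_apply, @eq_comm _ x]
  | succ n ih =>
    rw [← (Fin.consEquiv fun _ => Bool).sum_comp, Fintype.sum_prod_type, Fintype.sum_bool]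
    simp only [Fin.consEquiv_apply, List.ofFn_succ, Fin.cons_zero, Fin.cons_succ, List.prod_cons,
      if_true, Bool.false_eq_true, if_false, ← eq_inv_mul_iff_mul_eq, inv_inv]
    rw [ih, ih]
    simp only [signWalk, signAvg]
    ring

variable [Fintype G]

theorem sum_signWalk (l : List G) : ∑ x, signWalk l x = 1 := by
  induction l with
  | nil => simp [signWalk]
  | cons a l ih => rw [signWalk, sum_signAvg, ih]

theorem signWalk_append (l₁ l₂ : List G) (x : G) :
    signWalk (l₁ ++ l₂) x = ∑ c, signWalk l₁ c * signWalk l₂ (c⁻¹ * x) := by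
  induction l₁ generalizing x with
  | nil => simp [signWalk, Pi.single_apply]
  | cons a l₁ ih =>
    simp only [List.cons_append, signWalk, signAvg, ih, add_div, add_mul, sum_add_distrib,
      div_mul_eq_mul_div, ← sum_div]
    rw [← sum_comp_mul_left a (fun c => signWalk l₁ (a⁻¹ * c) * _),
      ← sum_comp_mul_left a⁻¹ (fun c => signWalk l₁ (a * c) * _)]
    simp [mul_assoc]

theorem sq_signWalk_append_le (l₁ l₂ : List G) (x : G) :
    signWalk (l₁ ++ l₂) x ^ 2 ≤ (∑ c, signWalk l₁ c ^ 2) * ∑ c, signWalk l₂ c ^ 2 := by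
  rw [signWalk_append, ← Equiv.sum_comp ((Equiv.inv G).trans (Equiv.mulRight x))
    (fun c => signWalk l₂ c ^ 2)]
  exact sum_mul_sq_le_sq_mul_sq _ _ _

theorem sum_sq_signWalk_le_or {s : ℕ} (hs : 0 < s) {l : List G}
    (hl : ∀ a ∈ l, s ≤ orderOf a) :
    ∑ x, signWalk l x ^ 2 ≤ √(24 / (24 + l.length)) ∨ ∀ x, signWalk l x ≤ 8 / s := by
  induction l with
  | nil => left; simp [signWalk, Pi.single_apply]
  | cons a l ih =>
    have ih := ih fun b hb => hl b (List.mem_cons_of_mem a hb)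
    by_cases hflat : ∀ x, signWalk l x ≤ 8 / s
    · exact Or.inr (signAvg_le hflat a)
    left
    obtain ⟨x, hx⟩ := not_forall.1 hflat
    obtain ⟨x₀, hmax⟩ := Finite.exists_max (signWalk l)
    set M := signWalk l x₀
    set q := ∑ x, signWalk l x ^ 2
    have hM : 8 / s < M := (not_le.1 hx).trans_le (hmax x)
    have hqM : q ≤ M := by
      simpa [sum_signWalk] using sum_sq_le_mul_sum (signWalk_nonneg l) hmax
    have hord : 4 ≤ M * orderOf (a ^ 2) := by
      have hsa : (s : ℝ) ≤ 2 * orderOf (a ^ 2) := by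
        exact_mod_cast (hl a List.mem_cons_self).trans (orderOf_le_two_mul_orderOf_sq a)
      have : 8 < M * s := (div_lt_iff₀ (by exact_mod_cast hs)).1 hM
      nlinarith [mul_le_mul_of_nonneg_left hsa (signWalk_nonneg l x₀)]
    have hdecay := cube_le_mul_sum_sq_sub (signWalk_nonneg l) (sum_signWalk l) hord
    have hq0 : 0 ≤ q := sum_nonneg fun x _ => sq_nonneg _
    calc ∑ x, signWalk (a :: l) x ^ 2
        = q - (∑ x, (signWalk l x - signWalk l (a ^ 2 * x)) ^ 2) / 4 := sum_sq_signAvg a _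
      _ ≤ q - q ^ 3 / 48 := by nlinarith [hdecay, pow_le_pow_left₀ hq0 hqM 3]
      _ ≤ √(24 / (24 + (a :: l).length)) :=
        sub_cube_div_le_sqrt hq0 (ih.resolve_right hflat)

theorem sum_sq_signWalk_le {s : ℕ} (hs : 0 < s) {l : List G} (hl : ∀ a ∈ l, s ≤ orderOf a) :
    ∑ x, signWalk l x ^ 2 ≤ √(24 / (24 + l.length)) + 8 / s := by
  rcases sum_sq_signWalk_le_or hs hl with h | h
  · linarith [div_nonneg (by norm_num : (0 : ℝ) ≤ 8) s.cast_nonneg]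
  · have := sum_sq_le_mul_sum (signWalk_nonneg l) h
    rw [sum_signWalk, mul_one] at this
    linarith [Real.sqrt_nonneg (24 / (24 + l.length))]

theorem signWalk_le {s : ℕ} (hs : 0 < s) {l : List G} (hl : ∀ a ∈ l, s ≤ orderOf a) (x : G) :
    signWalk l x ≤ √(24 / (24 + (l.length / 2 : ℕ))) + 8 / s := by
  set k := l.length / 2
  set X := √(24 / (24 + k)) + 8 / s
  have hX : 0 ≤ X := by positivity
  have h₁ : ∑ c, signWalk (l.take k) c ^ 2 ≤ X := by
    have := sum_sq_signWalk_le hs (l := l.take k) fun a ha => hl a (List.mem_of_mem_take ha)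
    rwa [List.length_take, min_eq_left (Nat.div_le_self _ 2)] at this
  have h₂ : ∑ c, signWalk (l.drop k) c ^ 2 ≤ X := by
    refine (sum_sq_signWalk_le hs (l := l.drop k) fun a ha =>
      hl a (List.mem_of_mem_drop ha)).trans ?_
    show _ ≤ √(24 / (24 + k)) + 8 / s
    gcongr
    rw [List.length_drop]
    exact_mod_cast (by omega : k ≤ l.length - k)
  have hsq := sq_signWalk_append_le (l.take k) (l.drop k) x
  rw [List.take_append_drop] at hsq
  refine (pow_le_pow_iff_left₀ (signWalk_nonneg l x) hX two_ne_zero).1 ?_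
  nlinarith [sum_nonneg fun c (_ : c ∈ univ) => sq_nonneg (signWalk (l.drop k) c)]

end SignWalk

/-- **Theorem 6.1.** There is an integer `p₀ > 1` such that for every `m ≥ 43`, every
prime `p ≥ max {m, p₀}`, and all integers `n, s ≥ 2`, if `A 1, …, A n` are elements of
`S = PSL_m(𝔽_p)` each of order at least `s`, then for every `B ∈ S` the number of sign
vectors `ε ∈ {−1,1}^n` with `A 1 ^ ε 1 ⋯ A n ^ ε n = B` is at most
`(2/p + 120/s + 19/√n) · 2^n`. -/
theorem nonabelian_littlewood_offord_PSL :
    ∃ p₀ : ℕ, 1 < p₀ ∧ ∀ (m n s p : ℕ), p₀ ≤ p → 43 ≤ m → p.Prime → m ≤ p →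
      2 ≤ n → 2 ≤ s →
      ∀ A : Fin n → PSL m p, (∀ i, s ≤ orderOf (A i)) →
      ∀ B : PSL m p,
        (Nat.card {ε : Fin n → Bool //
            (List.ofFn fun i => if ε i then A i else (A i)⁻¹).prod = B} : ℝ) ≤
          (2 / (p : ℝ) + 120 / (s : ℝ) + 19 / Real.sqrt n) * 2 ^ n := by
  refine ⟨2, one_lt_two, fun m n s p hp _ _ _ hn hs A hA B => ?_⟩
  classical
  have : NeZero p := ⟨by omega⟩
  have : Finite (PSL m p) := inferInstanceAs (Finite (_ ⧸ Subgroup.center _))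
  have := Fintype.ofFinite (PSL m p)
  have hwalk := SignWalk.signWalk_le (s := s) (by omega) (l := List.ofFn A)
    (fun a ha => by obtain ⟨i, rfl⟩ := List.mem_ofFn.1 ha; exact hA i) B
  rw [List.length_ofFn] at hwalk
  have h19 := sqrt_div_le_nineteen_div_sqrt (n := n) (by omega)
  have h120 : 8 / (s : ℝ) ≤ 120 / s := by gcongr; norm_num
  rw [SignWalk.card_signProducts_eq, mul_comm]
  gcongr
  linarith [(by positivity : (0 : ℝ) ≤ 2 / p)]
end

section
/- Let G be a finite group and let Φ be an irreducible finite-dimensional complex representation of G with character χ. Suppose there is a constant 0 < α < 1 such that |χ(x)| ≤ α·χ(1) for all x ∈ G ∖ Z(G). Let g ∈ G ∖ Z(G), and let k_1 be the order of the coset g·Z(G) in the quotient group G/Z(G). Then for every eigenvalue μ of the linear map Φ(g), the multiplicity m of μ (the dimension of the corresponding eigenspace of Φ(g)) satisfies (1/k_1 − α)·dim Φ < m < (1/k_1 + α)·dim Φ. -/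
/-!
Since `g ^ k₁` is central, Schur's lemma makes `Φ g ^ k₁` a scalar, necessarily `μ ^ k₁`. Hence
`A = μ⁻¹ • Φ g` satisfies `A ^ k₁ = 1`, and the average of its powers is the projection onto the
`μ`-eigenspace of `Φ g`; taking traces, `m = k₁⁻¹ * ∑_{j < k₁} μ⁻ʲ χ(gʲ)`. The term `j = 0` is
`dim Φ / k₁`, while for `0 < j < k₁` the element `gʲ` is noncentral and `|μ| = 1`, so each of the
other `k₁ - 1` terms has modulus at most `α dim Φ`. Thus `|m - dim Φ / k₁| ≤ (1 - 1/k₁) α dim Φ`.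
-/

open Finset Module Module.End

theorem QuotientGroup.pow_orderOf_mk_mem {G : Type*} [Group G] (N : Subgroup G) [N.Normal]
    (g : G) : g ^ orderOf (g : G ⧸ N) ∈ N := by
  rw [← QuotientGroup.eq_one_iff, QuotientGroup.mk_pow, pow_orderOf_eq_one]

theorem QuotientGroup.pow_notMem_of_lt_orderOf_mk {G : Type*} [Group G] {N : Subgroup G}
    [N.Normal] {g : G} {j : ℕ} (hj0 : j ≠ 0) (hj : j < orderOf (g : G ⧸ N)) : g ^ j ∉ N := by
  rw [← QuotientGroup.eq_one_iff, QuotientGroup.mk_pow]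
  exact pow_ne_one_of_lt_orderOf hj0 hj

section Eigenspace

variable {K V : Type*} [Field K] [AddCommGroup V] [Module K V]

theorem Module.End.HasEigenvalue.pow_eq_of_pow_eq_smul_one {f : End K V} {μ c : K}
    (hμ : f.HasEigenvalue μ) {n : ℕ} (hf : f ^ n = c • 1) : μ ^ n = c := by
  obtain ⟨v, hv⟩ := hμ.exists_hasEigenvector
  refine smul_left_injective K hv.2 ?_
  simp only [← hv.pow_apply n, hf, LinearMap.smul_apply, Module.End.one_apply]

theorem Module.End.eigenspace_smul {a : K} (ha : a ≠ 0) (f : End K V) (μ : K) :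
    eigenspace (a • f) (a * μ) = eigenspace f μ := by
  ext v
  simp only [mem_eigenspace_iff, LinearMap.smul_apply, mul_smul]
  exact (smul_right_injective V ha).eq_iff

/-- The average of the powers of `A` is the projection onto the fixed vectors of `A`. -/
theorem Module.End.finrank_eigenspace_one_eq_average_trace [FiniteDimensional K V]
    {A : End K V} {k : ℕ} (hA : A ^ k = 1) (hk : (k : K) ≠ 0) :
    (finrank K (eigenspace A 1) : K) = (k : K)⁻¹ * ∑ j ∈ range k, LinearMap.trace K V (A ^ j) := by
  set S := ∑ j ∈ range k, A ^ j
  have hAS : A * S = S := by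
    have := mul_geom_sum A k
    rw [hA, sub_self, sub_mul, one_mul, sub_eq_zero] at this
    exact this
  have hproj : LinearMap.IsProj (eigenspace A 1) ((k : K)⁻¹ • S) := by
    refine ⟨fun x ↦ ?_, fun x hx ↦ ?_⟩
    · rw [mem_eigenspace_iff, one_smul, ← Module.End.mul_apply, mul_smul_comm, hAS]
    · rw [mem_eigenspace_iff, one_smul] at hx
      have hpow (j : ℕ) : (A ^ j) x = x := by
        induction j with
        | zero => rfl
        | succ j ih => rw [pow_succ, Module.End.mul_apply, hx, ih]
      simp only [S, LinearMap.smul_apply, LinearMap.sum_apply, hpow, sum_const, card_range,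
        ← Nat.cast_smul_eq_nsmul K, inv_smul_smul₀ hk]
  rw [← hproj.trace, map_smul, map_sum, smul_eq_mul]

theorem Module.End.finrank_eigenspace_eq_average_trace [FiniteDimensional K V]
    {f : End K V} {μ : K} {k : ℕ} (hf : f ^ k = μ ^ k • 1) (hμ : μ ≠ 0) (hk : (k : K) ≠ 0) :
    (finrank K (eigenspace f μ) : K) =
      (k : K)⁻¹ * ∑ j ∈ range k, μ⁻¹ ^ j * LinearMap.trace K V (f ^ j) := by
  have hA : (μ⁻¹ • f) ^ k = 1 := by
    rw [smul_pow, hf, smul_smul, inv_pow, inv_mul_cancel₀ (pow_ne_zero k hμ), one_smul]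
  rw [← eigenspace_smul (inv_ne_zero hμ), inv_mul_cancel₀ hμ,
    finrank_eigenspace_one_eq_average_trace hA hk]
  simp only [smul_pow, map_smul, smul_eq_mul]

end Eigenspace

theorem Representation.exists_eq_smul_one_of_mem_center {K G V : Type*} [Field K] [IsAlgClosed K]
    [Group G] [AddCommGroup V] [Module K V] [FiniteDimensional K V] [Nontrivial V]
    (Φ : Representation K G V)
    (hirr : ∀ W : Submodule K V, (∀ g : G, W.map (Φ g) ≤ W) → W = ⊥ ∨ W = ⊤)
    {z : G} (hz : z ∈ Subgroup.center G) : ∃ c : K, Φ z = c • 1 := by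
  obtain ⟨c, hc⟩ := exists_eigenvalue (Φ z)
  have hinv (g : G) : (eigenspace (Φ z) c).map (Φ g) ≤ eigenspace (Φ z) c := by
    rintro _ ⟨v, hv, rfl⟩
    rw [SetLike.mem_coe, mem_eigenspace_iff] at hv
    rw [mem_eigenspace_iff, ← Module.End.mul_apply, ← map_mul,
      (Subgroup.mem_center_iff.mp hz g).symm, map_mul, Module.End.mul_apply, hv, map_smul]
  have htop := (hirr _ hinv).resolve_left hc
  refine ⟨c, LinearMap.ext fun v ↦ ?_⟩
  exact mem_eigenspace_iff.mp (htop ▸ Submodule.mem_top : v ∈ eigenspace (Φ z) c)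

theorem norm_average_sub_div_lt {𝕜 : Type*} [RCLike 𝕜] {k : ℕ} (hk : 0 < k) (a : ℕ → 𝕜)
    {B : ℝ} (hB : 0 < B) (ha : ∀ j, 0 < j → j < k → ‖a j‖ ≤ B) :
    ‖(k : 𝕜)⁻¹ * ∑ j ∈ range k, a j - a 0 / k‖ < B := by
  have hk' : (0 : ℝ) < k := Nat.cast_pos.mpr hk
  have htail : ‖∑ j ∈ Ico 1 k, a j‖ ≤ (k - 1 : ℕ) * B := by
    calc ‖∑ j ∈ Ico 1 k, a j‖ ≤ ∑ _j ∈ Ico 1 k, B :=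
          norm_sum_le_of_le _ fun j hj ↦ ha j (mem_Ico.mp hj).1 (mem_Ico.mp hj).2
      _ = (k - 1 : ℕ) * B := by rw [sum_const, Nat.card_Ico, nsmul_eq_mul]
  calc ‖(k : 𝕜)⁻¹ * ∑ j ∈ range k, a j - a 0 / k‖
      = (k : ℝ)⁻¹ * ‖∑ j ∈ Ico 1 k, a j‖ := by
        rw [sum_range_eq_add_Ico _ hk, mul_add, div_eq_inv_mul, add_sub_cancel_left, norm_mul,
          norm_inv, RCLike.norm_natCast]
    _ ≤ (k : ℝ)⁻¹ * ((k - 1 : ℕ) * B) := by gcongr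
    _ < B := by
        rw [Nat.cast_sub hk, Nat.cast_one, inv_mul_lt_iff₀ hk']
        linarith

theorem eigenvalue_multiplicity_bound_general {G : Type*} [Group G] [Finite G]
    {V : Type*} [AddCommGroup V] [Module ℂ V] [FiniteDimensional ℂ V]
    (Φ : Representation ℂ G V)
    (hirr : ∀ W : Submodule ℂ V, (∀ g : G, W.map (Φ g) ≤ W) → W = ⊥ ∨ W = ⊤)
    (α : ℝ) (hα0 : 0 < α)
    (hχ : ∀ x : G, x ∉ Subgroup.center G →
      ‖LinearMap.trace ℂ V (Φ x)‖ ≤ α * Module.finrank ℂ V)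
    (g : G) (k₁ : ℕ)
    (hk₁ : k₁ = orderOf (QuotientGroup.mk g : G ⧸ Subgroup.center G))
    (μ : ℂ) (hμ : Module.End.HasEigenvalue (Φ g) μ) :
    (1 / (k₁ : ℝ) - α) * Module.finrank ℂ V <
        (Module.finrank ℂ (Module.End.eigenspace (Φ g) μ) : ℝ) ∧
      (Module.finrank ℂ (Module.End.eigenspace (Φ g) μ) : ℝ) <
        (1 / (k₁ : ℝ) + α) * Module.finrank ℂ V := by
  have : Nontrivial V := hμ.exists_hasEigenvector.elim fun v hv ↦ nontrivial_of_ne v 0 hv.2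
  have hk : 0 < k₁ := hk₁ ▸ orderOf_pos _
  obtain ⟨c, hc⟩ := Φ.exists_eq_smul_one_of_mem_center hirr
    (hk₁ ▸ QuotientGroup.pow_orderOf_mk_mem (Subgroup.center G) g)
  rw [map_pow] at hc
  have hμk : Φ g ^ k₁ = μ ^ k₁ • 1 := by rw [hc, hμ.pow_eq_of_pow_eq_smul_one hc]
  have hμ1 : ‖μ‖ = 1 := Complex.norm_eq_one_of_pow_eq_one
    (hμ.pow_eq_of_pow_eq_smul_one (by rw [← map_pow, pow_orderOf_eq_one, map_one, one_smul]))
    (orderOf_pos g).ne'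
  have hterm (j : ℕ) (hj0 : 0 < j) (hj : j < k₁) :
      ‖μ⁻¹ ^ j * LinearMap.trace ℂ V (Φ g ^ j)‖ ≤ α * finrank ℂ V := by
    rw [norm_mul, norm_pow, norm_inv, hμ1, inv_one, one_pow, one_mul, ← map_pow]
    exact hχ _ (QuotientGroup.pow_notMem_of_lt_orderOf_mk hj0.ne' (hk₁ ▸ hj))
  have hest := norm_average_sub_div_lt hk _ (mul_pos hα0 (Nat.cast_pos.mpr finrank_pos)) hterm
  rw [← finrank_eigenspace_eq_average_trace hμk (norm_ne_zero_iff.mp (hμ1 ▸ one_ne_zero))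
    (Nat.cast_ne_zero.mpr hk.ne')] at hest
  simp only [pow_zero, one_mul, LinearMap.trace_one] at hest
  have hreal : |(finrank ℂ (eigenspace (Φ g) μ) : ℝ) - finrank ℂ V / k₁| < α * finrank ℂ V := by
    rw [← Real.norm_eq_abs, ← Complex.norm_real]; push_cast; exact hest
  rw [abs_lt] at hreal
  rw [sub_mul, add_mul, one_div_mul_eq_div]
  constructor <;> linarith

/-- **Lemma 3.1.** Let `G` be a finite group and `Φ` an irreducible finite-dimensional
complex representation of `G` with character `χ = trace ∘ Φ`. Suppose `0 < α < 1` is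
such that `|χ(x)| ≤ α·χ(1)` for all noncentral `x`. If `g` is noncentral and `g·Z(G)`
has order `k₁` in `G/Z(G)`, then the multiplicity `m` (eigenspace dimension) of any
eigenvalue of `Φ(g)` satisfies `(1/k₁ − α)·dim Φ < m < (1/k₁ + α)·dim Φ`. -/
theorem eigenvalue_multiplicity_bound {G : Type*} [Group G] [Finite G]
    {V : Type*} [AddCommGroup V] [Module ℂ V] [FiniteDimensional ℂ V]
    (Φ : Representation ℂ G V)
    (hirr : ∀ W : Submodule ℂ V, (∀ g : G, W.map (Φ g) ≤ W) → W = ⊥ ∨ W = ⊤)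
    (α : ℝ) (hα0 : 0 < α) (hα1 : α < 1)
    (hχ : ∀ x : G, x ∉ Subgroup.center G →
      ‖LinearMap.trace ℂ V (Φ x)‖ ≤ α * Module.finrank ℂ V)
    (g : G) (hg : g ∉ Subgroup.center G) (k₁ : ℕ)
    (hk₁ : k₁ = orderOf (QuotientGroup.mk g : G ⧸ Subgroup.center G))
    (μ : ℂ) (hμ : Module.End.HasEigenvalue (Φ g) μ) :
    (1 / (k₁ : ℝ) - α) * Module.finrank ℂ V <
        (Module.finrank ℂ (Module.End.eigenspace (Φ g) μ) : ℝ) ∧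
      (Module.finrank ℂ (Module.End.eigenspace (Φ g) μ) : ℝ) <
        (1 / (k₁ : ℝ) + α) * Module.finrank ℂ V :=
  eigenvalue_multiplicity_bound_general Φ hirr α hα0 hχ g k₁ hk₁ μ hμ
end

section
/- Let d ≥ 3 be an integer, p a prime with p ≥ d, and q = p^f ≥ 11 a power of p. Let F be a finite field with q elements and let H be either SL_d(F) or PSL_d(F). Then every element x ∈ H has order strictly less than q^{d+1}. -/
/-!
By Cayley–Hamilton every power of a `d × d` matrix `M` over `F` is a polynomial in `M` of degree
less than `d`, so `M` has at most `|F| ^ d` distinct powers. Orders can only drop on passing to a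
quotient group, so the same bound holds in `PSL_d(F)`.
-/

open Polynomial

theorem orderOf_le_ncard_of_forall_pow_mem {M : Type*} [Monoid M] {x : M} {s : Set M}
    (hs : s.Finite) (hx : ∀ n : ℕ, x ^ n ∈ s) : orderOf x ≤ s.ncard := by
  simpa using Set.ncard_le_ncard_of_injOn (x ^ ·) (fun n _ ↦ hx n)
    (fun _ hi _ hj hij ↦ pow_injOn_Iio_orderOf hi hj hij) hs

namespace Matrix

variable {n R : Type*} [Fintype n] [DecidableEq n] [CommRing R] [Nontrivial R]

theorem pow_mem_image_aeval_degreeLT (M : Matrix n n R) (k : ℕ) :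
    M ^ k ∈ aeval M '' (degreeLT R (Fintype.card n) : Set R[X]) := by
  refine ⟨X ^ k %ₘ M.charpoly, mem_degreeLT.2 ?_, (M.pow_eq_aeval_mod_charpoly k).symm⟩
  simpa [M.charpoly_degree_eq_dim] using degree_modByMonic_lt (X ^ k) M.charpoly_monic

theorem orderOf_le_card_pow [Fintype R] (M : Matrix n n R) :
    orderOf M ≤ Fintype.card R ^ Fintype.card n := by
  let S : Set R[X] := degreeLT R (Fintype.card n)
  have hcard : Nat.card S = Fintype.card R ^ Fintype.card n :=
    (Nat.card_congr (degreeLTEquiv R (Fintype.card n)).toEquiv).trans (by simp)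
  have hfin : S.Finite := Set.finite_coe_iff.1 (Nat.finite_of_card_ne_zero (by
    rw [hcard]; exact pow_ne_zero _ Fintype.card_ne_zero))
  calc orderOf M ≤ (aeval M '' S).ncard :=
        orderOf_le_ncard_of_forall_pow_mem (hfin.image _) M.pow_mem_image_aeval_degreeLT
    _ ≤ S.ncard := Set.ncard_image_le hfin
    _ = Fintype.card R ^ Fintype.card n := hcard

namespace SpecialLinearGroup

theorem orderOf_le_card_pow [Fintype R] (A : SpecialLinearGroup n R) :
    orderOf A ≤ Fintype.card R ^ Fintype.card n := by
  rw [← orderOf_injective coeMonoidHom coeMonoidHom_injective A]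
  exact (A : Matrix n n R).orderOf_le_card_pow

theorem orderOf_le_card_pow_of_quotient [Fintype R] (N : Subgroup (SpecialLinearGroup n R))
    [N.Normal] (A : SpecialLinearGroup n R ⧸ N) :
    orderOf A ≤ Fintype.card R ^ Fintype.card n := by
  obtain ⟨B, rfl⟩ := QuotientGroup.mk_surjective A
  calc orderOf (B : SpecialLinearGroup n R ⧸ N)
      ≤ orderOf B := Nat.le_of_dvd (orderOf_pos B) (orderOf_map_dvd (QuotientGroup.mk' _) B)
    _ ≤ Fintype.card R ^ Fintype.card n := B.orderOf_le_card_pow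

end SpecialLinearGroup

end Matrix

theorem orderOf_lt_SL_PSL_general (d q : ℕ)
    (F : Type*) [Field F] [Fintype F] (hF : Fintype.card F = q)
    (H : Type*) [Group H]
    (hH : Nonempty (H ≃* Matrix.SpecialLinearGroup (Fin d) F) ∨
      Nonempty (H ≃* (Matrix.SpecialLinearGroup (Fin d) F ⧸
        Subgroup.center (Matrix.SpecialLinearGroup (Fin d) F))))
    (x : H) :
    orderOf x < q ^ (d + 1) := by
  have hq : 1 < q := hF ▸ Fintype.one_lt_card
  have hx : orderOf x ≤ q ^ d := by
    rcases hH with ⟨⟨e⟩⟩ | ⟨⟨e⟩⟩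
    · simpa [e.orderOf_eq, hF] using (e x).orderOf_le_card_pow
    · simpa [e.orderOf_eq, hF] using
        Matrix.SpecialLinearGroup.orderOf_le_card_pow_of_quotient _ (e x)
  exact hx.trans_lt (Nat.pow_lt_pow_right hq d.lt_succ_self)

/-- **Proposition 3.3(iii), first part.** Let `d ≥ 3`, let `p ≥ d` be a prime, and let
`q = p^f ≥ 11`. Let `F` be the field with `q` elements and let `H` be either `SL_d(F)`
or `PSL_d(F)`. Then every element of `H` has order strictly less than `q^{d+1}`. -/
theorem orderOf_lt_SL_PSL (d p f q : ℕ) (hd : 3 ≤ d) (hp : p.Prime) (hpd : d ≤ p)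
    (hf : 1 ≤ f) (hq : q = p ^ f) (hq11 : 11 ≤ q)
    (F : Type*) [Field F] [Fintype F] (hF : Fintype.card F = q)
    (H : Type*) [Group H]
    (hH : Nonempty (H ≃* Matrix.SpecialLinearGroup (Fin d) F) ∨
      Nonempty (H ≃* (Matrix.SpecialLinearGroup (Fin d) F ⧸
        Subgroup.center (Matrix.SpecialLinearGroup (Fin d) F))))
    (x : H) :
    orderOf x < q ^ (d + 1) :=
  orderOf_lt_SL_PSL_general d q F hF H hH x
end

section
/- Let M be an n × n complex matrix. Then |trace M| ≤ ∑_{i=1}^n s_i(M), where s_1(M), …, s_n(M) are the singular values of M, i.e., the (nonnegative) square roots of the eigenvalues of the Hermitian positive semidefinite matrix MᴴM. -/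
/-!
Take an orthonormal eigenbasis `(bᵢ)` of `Mᴴ M`, with eigenvalues `λᵢ`. Then
`trace M = ∑ ⟪bᵢ, M bᵢ⟫`, and by Cauchy–Schwarz `|⟪bᵢ, M bᵢ⟫| ≤ ‖M bᵢ‖ = √λᵢ`, because
`‖M bᵢ‖² = ⟪bᵢ, Mᴴ M bᵢ⟫ = λᵢ`.
-/

open scoped InnerProductSpace

theorem LinearMap.norm_trace_le_sum_norm_apply {𝕜 E ι : Type*} [RCLike 𝕜] [Fintype ι]
    [NormedAddCommGroup E] [InnerProductSpace 𝕜 E] (T : E →ₗ[𝕜] E)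
    (b : OrthonormalBasis ι 𝕜 E) :
    ‖T.trace 𝕜 E‖ ≤ ∑ i, ‖T (b i)‖ := by
  rw [T.trace_eq_sum_inner b]
  refine (norm_sum_le _ _).trans (Finset.sum_le_sum fun i _ => ?_)
  simpa [b.orthonormal.1 i] using norm_inner_le_norm (𝕜 := 𝕜) (b i) (T (b i))

namespace Matrix

variable {𝕜 m n : Type*} [RCLike 𝕜] [Fintype m] [Fintype n] [DecidableEq n]

theorem trace_toEuclideanLin (A : Matrix n n 𝕜) :
    (toEuclideanLin A).trace 𝕜 _ = A.trace := by
  rw [toEuclideanLin_eq_toLin_orthonormal, trace_toLin_eq]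

theorem norm_toEuclideanLin_apply_sq (A : Matrix m n 𝕜) (v : EuclideanSpace 𝕜 n) :
    ‖toEuclideanLin A v‖ ^ 2 = RCLike.re ⟪v, toEuclideanLin (Aᴴ * A) v⟫_𝕜 := by
  classical
  rw [toLpLin_mul_same, toEuclideanLin_conjTranspose_eq_adjoint, LinearMap.comp_apply,
    LinearMap.adjoint_inner_right, inner_self_eq_norm_sq]

theorem norm_toEuclideanLin_eigenvectorBasis (A : Matrix m n 𝕜) (i : n) :
    ‖toEuclideanLin A ((isHermitian_conjTranspose_mul_self A).eigenvectorBasis i)‖ =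
      √((isHermitian_conjTranspose_mul_self A).eigenvalues i) := by
  set hA := isHermitian_conjTranspose_mul_self A
  have hb : toEuclideanLin (Aᴴ * A) (hA.eigenvectorBasis i) =
      (hA.eigenvalues i : 𝕜) • hA.eigenvectorBasis i := by
    rw [toLpLin_apply, hA.mulVec_eigenvectorBasis i, RCLike.real_smul_eq_coe_smul (K := 𝕜)]
    rfl
  rw [← Real.sqrt_sq (norm_nonneg _), norm_toEuclideanLin_apply_sq, hb, inner_smul_right,
    inner_self_eq_norm_sq_to_K, hA.eigenvectorBasis.orthonormal.1 i]
  simp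

end Matrix

/-- **Lemma 5.1, first part.** For any `n × n` complex matrix `M`, the absolute value of
its trace is at most the sum of its singular values, i.e. of the square roots of the
eigenvalues of the Hermitian positive semidefinite matrix `Mᴴ * M`. -/
theorem abs_trace_le_sum_singular_values (n : ℕ) (M : Matrix (Fin n) (Fin n) ℂ) :
    ‖M.trace‖ ≤
      ∑ i : Fin n,
        Real.sqrt ((Matrix.isHermitian_conjTranspose_mul_self M).eigenvalues i) := by
  rw [← M.trace_toEuclideanLin]
  simpa only [Matrix.norm_toEuclideanLin_eigenvectorBasis] using
    (Matrix.toEuclideanLin M).norm_trace_le_sum_norm_apply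
      (Matrix.isHermitian_conjTranspose_mul_self M).eigenvectorBasis
end
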